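/- Let α > 0, let A generate an α-times resolvent family S_α on a complex Banach space X, and let n ∈ ℕ with nα ≥ 1. Then for every x ∈ D(Aⁿ), the map t ↦ S_α(t)x is differentiable on (0,∞) and (d/dt)(S_α(t)x) = Σ_{k=1}^{n−1} g_{kα}(t) A^k x + (g_{nα−1} * S_α)(t) Aⁿ x for all t > 0. -/

import Mathlib

open MeasureTheory Filter Set Topology Metric
open scoped Real Topology ENNReal

attribute [local instance] Classical.propDecidable
noncomputable section

variable {X : Type*} [NormedAddCommGroup X] [NormedSpace ℂ X] [CompleteSpace X]

/-- The kernel `g_β(t) = t^(β-1)/Γ(β)` for `t ≥ 0`, and `0` for `t < 0`. -/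
def gk (β t : ℝ) : ℝ := if 0 ≤ t then t ^ (β - 1) / Real.Gamma β else 0

/-- Application of a partial (unbounded) linear operator, extended by `0` off its domain. -/
def pApply (A : X →ₗ.[ℂ] X) (x : X) : X := if h : x ∈ A.domain then A ⟨x, h⟩ else 0

/-- The negative `-A` of a partial linear operator. -/
def negP (A : X →ₗ.[ℂ] X) : X →ₗ.[ℂ] X := { domain := A.domain, toFun := -A.toFun }

/-- `R` is the resolvent operator `(μ - A)⁻¹` of `A` at `μ`. -/
def IsResolventOp (A : X →ₗ.[ℂ] X) (μ : ℂ) (R : X →L[ℂ] X) : Prop :=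
  (∀ y : X, ∃ hy : R y ∈ A.domain, μ • R y - A ⟨R y, hy⟩ = y) ∧
  (∀ x : X, ∀ hx : x ∈ A.domain, R (μ • x - A ⟨x, hx⟩) = x)

def pResolventSet (A : X →ₗ.[ℂ] X) : Set ℂ := {μ | ∃ R, IsResolventOp A μ R}

def resolventOf (A : X →ₗ.[ℂ] X) (μ : ℂ) : X →L[ℂ] X :=
  if h : ∃ R, IsResolventOp A μ R then h.choose else 0

/-- The open sector `Σ_ω` of half-angle `ω` around the positive axis. -/
def sector (ω : ℝ) : Set ℂ :=
  if ω = 0 then {z : ℂ | 0 < z.re ∧ z.im = 0} else {z : ℂ | z ≠ 0 ∧ |z.arg| < ω}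

/-- `A` is a (densely defined, closed) sectorial operator of angle `ω`. -/
def IsSectorial (A : X →ₗ.[ℂ] X) (ω : ℝ) : Prop :=
  Dense (A.domain : Set X) ∧ IsClosed (A.graph : Set (X × X)) ∧
  (pResolventSet A)ᶜ ⊆ closure (sector ω) ∧
  ∀ ω' ∈ Ioo ω π, ∃ M : ℝ, ∀ z ∈ (closure (sector ω'))ᶜ, ‖z • resolventOf A z‖ ≤ M

/-- `S` is an `α`-times resolvent family generated by `A`. -/
def IsResolventFamily (α : ℝ) (A : X →ₗ.[ℂ] X) (S : ℝ → X →L[ℂ] X) : Prop :=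
  (∀ x : X, ContinuousOn (fun t => S t x) (Ici 0)) ∧
  S 0 = ContinuousLinearMap.id ℂ X ∧
  (∀ t ∈ Ici (0:ℝ), ∀ x : X, ∀ hx : x ∈ A.domain,
      ∃ h2 : S t x ∈ A.domain, A ⟨S t x, h2⟩ = S t (A ⟨x, hx⟩)) ∧
  (∀ t ∈ Ici (0:ℝ), ∀ x : X, ∀ hx : x ∈ A.domain,
      S t x = x + ∫ s in (0:ℝ)..t, gk α (t - s) • S s (A ⟨x, hx⟩))

/-- `A ∈ 𝒜_α(θ₀)`: `A` generates an `α`-times resolvent family which extends analytically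
to the sector `Σ_{θ₀}` and is bounded on each smaller sector. -/
def InAnalyticClass (α : ℝ) (A : X →ₗ.[ℂ] X) (θ₀ : ℝ) : Prop :=
  ∃ (S : ℝ → X →L[ℂ] X) (T : ℂ → X →L[ℂ] X),
    IsResolventFamily α A S ∧
    DifferentiableOn ℂ T (sector θ₀) ∧
    (∀ t : ℝ, 0 < t → T t = S t) ∧
    ∀ θ ∈ Ioo 0 θ₀, ∃ M : ℝ, ∀ z ∈ sector θ, ‖T z‖ ≤ M

def cray (r φ : ℝ) : ℂ := (r : ℂ) * Complex.exp ((φ : ℂ) * Complex.I)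

/-- Integral over the keyhole contour from `∞e^{-iφ}` to `∞e^{iφ}` (the two rays of modulus
`≥ d`, avoiding the origin via the arc of radius `d`), of an operator-valued function. -/
def keyhole (G : ℂ → X →L[ℂ] X) (φ d : ℝ) : X →L[ℂ] X :=
  (∫ r in Ioi d, Complex.exp ((φ : ℂ) * Complex.I) • G (cray r φ)) -
  (∫ r in Ioi d, Complex.exp (-(φ : ℂ) * Complex.I) • G (cray r (-φ))) +
  (∫ θ in Ioo (-φ) φ, (Complex.I * cray d θ) • G (cray d θ))

/-- `A^{-b}`, via the contour integral `-(2πi)⁻¹ ∫_{Γ(ζ)} λ^{-b} (λ - A)⁻¹ dλ`. -/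
def negFracPow (A : X →ₗ.[ℂ] X) (b ζ d : ℝ) : X →L[ℂ] X :=
  (-(2 * (π : ℂ) * Complex.I)⁻¹) • keyhole (fun μ => (μ ^ (-(b : ℂ))) • resolventOf A μ) ζ d

/-- `A^b := (A^{-b})⁻¹`, as a partial linear operator (for `0 ∈ ρ(A)`), defined through the
inverse (flipped) graph of the bounded operator `A^{-b}`. -/
def fracPowC (A : X →ₗ.[ℂ] X) (b ζ d : ℝ) : X →ₗ.[ℂ] X :=
  (Submodule.map ((LinearEquiv.prodComm ℂ X X).toLinearMap)
    (LinearMap.graph ((negFracPow A b ζ d : X →L[ℂ] X) : X →ₗ[ℂ] X))).toLinearPMap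

/-- `A^b` with a canonical choice of the inner radius of the contour. -/
def fracPowC' (A : X →ₗ.[ℂ] X) (b ζ : ℝ) : X →ₗ.[ℂ] X :=
  if h : ∃ d : ℝ, 0 < d ∧ closedBall (0 : ℂ) d ⊆ pResolventSet A
  then fracPowC A b ζ h.choose
  else (⊥ : Submodule ℂ (X × X)).toLinearPMap

/-- The shifted operator `A + ε`. -/
def shiftOp (A : X →ₗ.[ℂ] X) (ε : ℝ) : X →ₗ.[ℂ] X :=
  { domain := A.domain
    toFun := A.toFun + (ε : ℂ) • A.domain.subtype }

/-- The fractional power `A^b` in general: the strong limit of `(A + ε)^b` as `ε → 0⁺`. -/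
def fracPow (A : X →ₗ.[ℂ] X) (b ζ : ℝ) : X →ₗ.[ℂ] X :=
  (Submodule.span ℂ {p : X × X |
    Tendsto (fun ε : ℝ => pApply (fracPowC' (shiftOp A ε) b ζ) p.1) (𝓝[>] 0) (𝓝 p.2)}).toLinearPMap

/-- The Mittag-Leffler function `E_a(z) = Σ zⁿ/Γ(an+1)`. -/
def mlE (a : ℝ) (z : ℂ) : ℂ := ∑' n : ℕ, z ^ n / Complex.Gamma ((a * n + 1 : ℝ) : ℂ)


/-- The stable density `p_α(t,s)` (Yosida's formula), written with contour parameter `θ`. -/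
def pKer (α θ t s : ℝ) : ℝ :=
  (1 / π) * ∫ ρ in Ioi (0:ℝ),
    Real.exp (s * ρ * Real.cos θ - t * ρ ^ α * Real.cos (α * θ)) *
    Real.sin (s * ρ * Real.sin θ - t * ρ ^ α * Real.sin (α * θ) + θ)

/-- The Wright-type function `Φ_γ(z) = Σ (-z)ⁿ/(n! Γ(-γn+1-γ))`. -/
def wrightPhi (γ z : ℝ) : ℝ :=
  ∑' n : ℕ, (-z) ^ n / ((n.factorial : ℝ) * Real.Gamma (-γ * n + 1 - γ))

/-- `φ_γ(t,s) = t^{-γ} Φ_γ(s t^{-γ})`. -/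
def phiK (γ t s : ℝ) : ℝ := t ^ (-γ) * wrightPhi γ (s * t ^ (-γ))

/-- The interval `[0, τ)` for `τ ∈ (0, ∞]`. -/
def Jset (τ : ℝ≥0∞) : Set ℝ := {t : ℝ | 0 ≤ t ∧ ENNReal.ofReal t < τ}

/-- Convolution of a scalar kernel with a vector-valued function: `(k * u)(t)`. -/
def convK (k : ℝ → ℝ) (u : ℝ → X) (t : ℝ) : X := ∫ s in (0:ℝ)..t, k (t - s) • u s

/-- Convolution of an operator family with a vector-valued function: `(S * f)(t)`. -/
def convSf (S : ℝ → X →L[ℂ] X) (f : ℝ → X) (t : ℝ) : X := ∫ s in (0:ℝ)..t, (S (t - s)) (f s)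

/-- `(g_β * u)(t)`, with the convention that `g_0 = δ`, so `g_0 * u = u`. -/
def convK0 (β : ℝ) (u : ℝ → X) (t : ℝ) : X := if β = 0 then u t else convK (gk β) u t

/-! Write `y_k = Aᵏ x`. For `k < n` the defining identity of the resolvent family reads
`S(·) y_k = y_k + g_α * S(·) y_{k+1}`. Iterating it, with the semigroup law
`g_β * g_γ = g_{β+γ}` (a Beta integral) and Fubini for the associativity of the convolution,
gives `S(t) x = ∑_{k<n} g_{kα+1}(t) y_k + (g_{nα} * S(·) y_n)(t)` for `t ≥ 0`.
For `t > 0` each `g_{kα+1}` has derivative `g_{kα}` (zero for `k = 0`), and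
`g_{nα} * v = g_1 * (g_{nα-1} * v)` is the primitive of `g_{nα-1} * v`, which is continuous since
`g_{nα-1}` is locally integrable (when `nα = 1` it is the primitive of `v` itself). -/

open scoped Interval

theorem gk_of_nonneg {β t : ℝ} (ht : 0 ≤ t) : gk β t = t ^ (β - 1) / Real.Gamma β :=
  if_pos ht

theorem gk_of_neg {β t : ℝ} (ht : t < 0) : gk β t = 0 := if_neg ht.not_ge

theorem gk_nonneg {β : ℝ} (hβ : 0 < β) (t : ℝ) : 0 ≤ gk β t := by
  unfold gk
  split_ifs with ht
  · exact div_nonneg (Real.rpow_nonneg ht _) (Real.Gamma_pos_of_pos hβ).le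
  · exact le_rfl

theorem gk_one_of_nonneg {t : ℝ} (ht : 0 ≤ t) : gk 1 t = 1 := by
  simp [gk_of_nonneg ht]

theorem measurable_gk (β : ℝ) : Measurable (gk β) :=
  Measurable.ite measurableSet_Ici ((measurable_id.pow_const _).div_const _) measurable_const

theorem intervalIntegrable_gk {β : ℝ} (hβ : 0 < β) (a b : ℝ) :
    IntervalIntegrable (gk β) volume a b := by
  have hrpow : IntervalIntegrable (fun t : ℝ => t ^ (β - 1) / Real.Gamma β) volume a b :=
    (intervalIntegral.intervalIntegrable_rpow' (by linarith)).div_const _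
  have hgk : gk β = (Ici 0).indicator fun t => t ^ (β - 1) / Real.Gamma β := by
    ext t
    simp only [gk, indicator, mem_Ici]
  rw [hgk, intervalIntegrable_iff] at *
  exact hrpow.indicator measurableSet_Ici

theorem intervalIntegrable_gk_sub {β : ℝ} (hβ : 0 < β) (c a b : ℝ) :
    IntervalIntegrable (fun s => gk β (c - s)) volume a b := by
  simpa using (intervalIntegrable_gk hβ (c - a) (c - b)).comp_sub_left c

theorem hasDerivAt_gk {c t : ℝ} (hc : 0 < c) (ht : 0 < t) :
    HasDerivAt (gk (c + 1)) (gk c t) t := by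
  have hpow := (Real.hasDerivAt_rpow_const (p := c) (Or.inl ht.ne')).div_const
    (Real.Gamma (c + 1))
  have hderiv : c * t ^ (c - 1) / Real.Gamma (c + 1) = gk c t := by
    rw [gk_of_nonneg ht.le, Real.Gamma_add_one hc.ne']
    field_simp [(Real.Gamma_pos_of_pos hc).ne']
  rw [← hderiv]
  refine hpow.congr_of_eventuallyEq ?_
  filter_upwards [Ioi_mem_nhds ht] with r hr
  rw [gk_of_nonneg (le_of_lt hr), add_sub_cancel_right]

theorem integral_rpow_mul_rpow_sub {β γ c : ℝ} (hβ : 0 < β) (hγ : 0 < γ) (hc : 0 < c) :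
    ∫ s in (0:ℝ)..c, s ^ (γ - 1) * (c - s) ^ (β - 1)
      = c ^ (γ + β - 1) * (Real.Gamma γ * Real.Gamma β / Real.Gamma (γ + β)) := by
  have hbeta := Complex.betaIntegral_scaled (γ : ℂ) (β : ℂ) hc
  rw [Complex.betaIntegral_eq_Gamma_mul_div _ _ (by simpa) (by simpa)] at hbeta
  have hint : ∫ s in (0:ℝ)..c, ((s ^ (γ - 1) * (c - s) ^ (β - 1) : ℝ) : ℂ)
      = ∫ s in (0:ℝ)..c, (s : ℂ) ^ ((γ : ℂ) - 1) * ((c : ℂ) - s) ^ ((β : ℂ) - 1) := by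
    refine intervalIntegral.integral_congr fun s hs => ?_
    rw [uIcc_of_le hc.le] at hs
    rw [Complex.ofReal_mul, Complex.ofReal_cpow hs.1, Complex.ofReal_cpow (sub_nonneg.2 hs.2)]
    push_cast
    ring_nf
  apply Complex.ofReal_injective
  rw [← intervalIntegral.integral_ofReal, hint, hbeta, Complex.ofReal_mul,
    Complex.ofReal_cpow hc.le, Complex.ofReal_div, Complex.ofReal_mul,
    Complex.Gamma_ofReal, Complex.Gamma_ofReal, ← Complex.ofReal_add, Complex.Gamma_ofReal]
  push_cast
  rfl

theorem integral_gk_sub_mul_gk {β γ c : ℝ} (hβ : 0 < β) (hγ : 0 < γ) (hc : 0 < c) :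
    ∫ s in (0:ℝ)..c, gk β (c - s) * gk γ s = gk (β + γ) c := by
  have hΓβ := (Real.Gamma_pos_of_pos hβ).ne'
  have hΓγ := (Real.Gamma_pos_of_pos hγ).ne'
  have hΓβγ := (Real.Gamma_pos_of_pos (add_pos hγ hβ)).ne'
  calc ∫ s in (0:ℝ)..c, gk β (c - s) * gk γ s
      = (∫ s in (0:ℝ)..c, s ^ (γ - 1) * (c - s) ^ (β - 1))
          / (Real.Gamma β * Real.Gamma γ) := by
        rw [← intervalIntegral.integral_div]
        refine intervalIntegral.integral_congr fun s hs => ?_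
        rw [uIcc_of_le hc.le] at hs
        simp only [gk_of_nonneg hs.1, gk_of_nonneg (sub_nonneg.2 hs.2)]
        ring
    _ = gk (β + γ) c := by
        rw [integral_rpow_mul_rpow_sub hβ hγ hc, gk_of_nonneg hc.le, add_comm γ β]
        field_simp

theorem integral_gk_sub {β r : ℝ} (hβ : 0 < β) (hr : 0 ≤ r) :
    ∫ s in (0:ℝ)..r, gk β (r - s) = gk (β + 1) r := by
  rcases hr.eq_or_lt with rfl | hr
  · simp [gk_of_nonneg le_rfl, Real.zero_rpow hβ.ne']
  rw [← integral_gk_sub_mul_gk hβ one_pos hr]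
  refine intervalIntegral.integral_congr fun s hs => ?_
  rw [uIcc_of_le hr.le] at hs
  simp [gk_one_of_nonneg hs.1]

theorem continuous_comp_max_zero {F : Type*} [TopologicalSpace F] {v : ℝ → F}
    (hv : ContinuousOn v (Ici 0)) : Continuous fun s => v (max s 0) :=
  hv.comp_continuous (continuous_id.max continuous_const) fun s => le_max_right s 0

section Convolution

variable {E : Type*} [NormedAddCommGroup E] [NormedSpace ℝ E]

theorem integral_gk_sub_smul_of_mem_Icc {γ a b c : ℝ} (hc : c ∈ Icc a b) (F : ℝ → E) :
    ∫ τ in a..b, gk γ (c - τ) • F τ = ∫ τ in a..c, gk γ (c - τ) • F τ := by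
  rw [← intervalIntegral.integral_indicator hc]
  congr 1 with τ
  by_cases h : τ ≤ c
  · rw [indicator_of_mem (show τ ∈ {x | x ≤ c} from h)]
  · rw [indicator_of_notMem (show τ ∉ {x | x ≤ c} from h), gk_of_neg (by linarith), zero_smul]

theorem integral_gk_sub_mul_gk_sub {β γ r σ : ℝ} (hβ : 0 < β) (hγ : 0 < γ)
    (hσ : σ ∈ Ico 0 r) :
    ∫ s in (0:ℝ)..r, gk β (r - s) * gk γ (s - σ) = gk (β + γ) (r - σ) := by
  have hsub := intervalIntegral.integral_comp_sub_left (a := 0) (b := r)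
    (fun τ => gk γ (r - σ - τ) • gk β τ) r
  simp only [sub_self, sub_zero, sub_sub_sub_cancel_left, smul_eq_mul] at hsub
  simp_rw [mul_comm (gk β _)]
  rw [hsub, add_comm β γ, ← integral_gk_sub_mul_gk hγ hβ (sub_pos.2 hσ.2)]
  simpa using integral_gk_sub_smul_of_mem_Icc (E := ℝ) (a := 0)
    ⟨sub_nonneg.2 hσ.2.le, sub_le_self r hσ.1⟩ (gk β)

theorem integral_sub_smul_eq_integral_indicator (k : ℝ → ℝ) (v : ℝ → E) {t T : ℝ}
    (ht : t ∈ Icc 0 T) :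
    ∫ s in (0:ℝ)..t, k (t - s) • v s
      = ∫ σ in (0:ℝ)..T, {σ | σ ≤ t}.indicator (fun σ => k σ • v (t - σ)) σ := by
  rw [intervalIntegral.integral_indicator ht]
  simpa using intervalIntegral.integral_comp_sub_left (a := 0) (b := t)
    (fun σ => k σ • v (t - σ)) t

-- Dominated convergence, by `‖k σ‖ * sup ‖v‖`, for the right-hand side of
-- `integral_sub_smul_eq_integral_indicator`.
theorem continuousOn_integral_sub_smul {k : ℝ → ℝ}
    (hk : ∀ T, IntervalIntegrable k volume 0 T) {v : ℝ → E} (hv : Continuous v) :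
    ContinuousOn (fun t => ∫ s in (0:ℝ)..t, k (t - s) • v s) (Ici 0) := by
  intro t₀ ht₀
  set T := t₀ + 1
  have hT : Iio T ∈ 𝓝 t₀ := Iio_mem_nhds (by linarith)
  obtain ⟨C, hC⟩ := (isCompact_Icc (a := 0) (b := T)).exists_bound_of_continuousOn
    hv.continuousOn
  have hC0 : 0 ≤ C := (norm_nonneg _).trans (hC 0 ⟨le_rfl, by linarith [mem_Ici.1 ht₀]⟩)
  set F : ℝ → ℝ → E := fun t => {σ | σ ≤ t}.indicator fun σ => k σ • v (t - σ)
  have hcont : ContinuousWithinAt (fun t => ∫ σ in (0:ℝ)..T, F t σ) (Ici 0) t₀ := by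
    refine intervalIntegral.continuousWithinAt_of_dominated_interval
      (bound := fun σ => ‖k σ‖ * C) ?_ ?_ ((hk T).norm.mul_const C) ?_
    · filter_upwards with t
      exact ((hk T).aestronglyMeasurable_restrict_uIoc.smul
        (hv.comp (continuous_const.sub continuous_id)).aestronglyMeasurable).indicator
        measurableSet_Iic
    · filter_upwards [self_mem_nhdsWithin, nhdsWithin_le_nhds hT] with t ht htT
      filter_upwards with σ hσ
      rw [uIoc_of_le (by linarith [mem_Ici.1 ht₀])] at hσ
      simp only [F]
      by_cases h : σ ≤ t
      · rw [indicator_of_mem (show σ ∈ {x | x ≤ t} from h), norm_smul]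
        gcongr
        exact hC _ ⟨by linarith, by linarith [hσ.1, mem_Iio.1 htT]⟩
      · rw [indicator_of_notMem (show σ ∉ {x | x ≤ t} from h), norm_zero]
        positivity
    · filter_upwards [Measure.ae_ne volume t₀] with σ hσt₀ _
      refine ContinuousAt.continuousWithinAt ?_
      rcases hσt₀.lt_or_gt with hlt | hgt
      · have hsmul : Continuous fun t => k σ • v (t - σ) := by fun_prop
        refine hsmul.continuousAt.congr_of_eventuallyEq ?_
        filter_upwards [Ioi_mem_nhds hlt] with t ht
        exact indicator_of_mem (show σ ∈ {x | x ≤ t} from (mem_Ioi.1 ht).le) _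
      · refine (continuous_const (y := (0 : E))).continuousAt.congr_of_eventuallyEq ?_
        filter_upwards [Iio_mem_nhds hgt] with t ht
        exact indicator_of_notMem (show σ ∉ {x | x ≤ t} from not_le.2 (mem_Iio.1 ht)) _
  refine hcont.congr_of_eventuallyEq ?_
    (integral_sub_smul_eq_integral_indicator k v ⟨ht₀, by linarith⟩)
  filter_upwards [self_mem_nhdsWithin, nhdsWithin_le_nhds hT] with t ht htT
  exact integral_sub_smul_eq_integral_indicator k v ⟨ht, le_of_lt htT⟩

theorem integrableOn_gk_mul_gk_smul {β γ r : ℝ} (hβ : 0 < β) (hγ : 0 < γ) (hr : 0 ≤ r)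
    {v : ℝ → E} (hv : Continuous v) :
    IntegrableOn (fun p : ℝ × ℝ => (gk β (r - p.1) * gk γ (p.1 - p.2)) • v p.2)
      (Ι 0 r ×ˢ Ι 0 r) := by
  rw [uIoc_of_le hr, IntegrableOn, Measure.volume_eq_prod, ← Measure.prod_restrict,
    integrable_prod_iff]
  · constructor
    · filter_upwards with s
      simp_rw [mul_smul]
      exact (((intervalIntegrable_gk_sub hγ s 0 r).smul_continuousOn hv.continuousOn).1).smul
        (gk β (r - s))
    · have hnorm : ∀ s ∈ Ioc 0 r,
          gk β (r - s) * ∫ σ in (0:ℝ)..s, gk γ (s - σ) • ‖v σ‖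
            = ∫ σ in Ioc 0 r, ‖(gk β (r - s) * gk γ (s - σ)) • v σ‖ := by
        intro s hs
        rw [← integral_gk_sub_smul_of_mem_Icc ⟨hs.1.le, hs.2⟩,
          intervalIntegral.integral_of_le hr, ← integral_const_mul]
        refine setIntegral_congr_fun measurableSet_Ioc fun σ _ => ?_
        rw [norm_smul, Real.norm_eq_abs, abs_of_nonneg (mul_nonneg (gk_nonneg hβ _)
          (gk_nonneg hγ _)), smul_eq_mul, mul_assoc]
      refine IntegrableOn.congr_fun ?_ hnorm measurableSet_Ioc
      exact ((intervalIntegrable_gk_sub hβ r 0 r).mul_continuousOn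
        ((continuousOn_integral_sub_smul (intervalIntegrable_gk hγ 0) hv.norm).mono
          (by rw [uIcc_of_le hr]; exact Icc_subset_Ici_self))).1
  · exact ((((measurable_gk β).comp (measurable_const.sub measurable_fst)).mul
      ((measurable_gk γ).comp (measurable_fst.sub measurable_snd))).aestronglyMeasurable.smul
      (hv.comp continuous_snd).aestronglyMeasurable)

theorem integral_gk_sub_smul_integral_gk_sub_smul [CompleteSpace E] {β γ r : ℝ} (hβ : 0 < β)
    (hγ : 0 < γ) (hr : 0 ≤ r) {v : ℝ → E} (hv : Continuous v) :
    ∫ s in (0:ℝ)..r, gk β (r - s) • ∫ σ in (0:ℝ)..s, gk γ (s - σ) • v σ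
      = ∫ σ in (0:ℝ)..r, gk (β + γ) (r - σ) • v σ := by
  calc _ = ∫ s in (0:ℝ)..r, ∫ σ in (0:ℝ)..r, (gk β (r - s) * gk γ (s - σ)) • v σ := by
        -- the inner integrand vanishes for `σ > s`
        refine intervalIntegral.integral_congr fun s hs => ?_
        rw [uIcc_of_le hr] at hs
        simp only [mul_smul]
        rw [intervalIntegral.integral_smul, integral_gk_sub_smul_of_mem_Icc hs]
    _ = ∫ σ in (0:ℝ)..r, ∫ s in (0:ℝ)..r, (gk β (r - s) * gk γ (s - σ)) • v σ :=
        intervalIntegral_intervalIntegral_swap (integrableOn_gk_mul_gk_smul hβ hγ hr hv)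
    _ = _ := by
        refine intervalIntegral.integral_congr_ae ?_
        filter_upwards [Measure.ae_ne volume r] with σ hσr hσ
        rw [uIoc_of_le hr] at hσ
        rw [intervalIntegral.integral_smul_const,
          integral_gk_sub_mul_gk_sub hβ hγ ⟨hσ.1.le, lt_of_le_of_ne hσ.2 hσr⟩]

theorem hasDerivAt_integral_gk_one_sub_smul [CompleteSpace E] {v : ℝ → E} (hv : Continuous v)
    {t : ℝ} (ht : 0 < t) :
    HasDerivAt (fun r => ∫ s in (0:ℝ)..r, gk 1 (r - s) • v s) (v t) t := by
  refine (intervalIntegral.integral_hasDerivAt_right (hv.intervalIntegrable 0 t)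
    (hv.stronglyMeasurableAtFilter _ _) hv.continuousAt).congr_of_eventuallyEq ?_
  filter_upwards [Ioi_mem_nhds ht] with r hr
  refine intervalIntegral.integral_congr fun s hs => ?_
  rw [uIcc_of_le (le_of_lt hr)] at hs
  simp [gk_one_of_nonneg (sub_nonneg.2 hs.2)]

theorem hasDerivAt_integral_gk_add_one_sub_smul [CompleteSpace E] {γ : ℝ} (hγ : 0 < γ)
    {v : ℝ → E} (hv : Continuous v) {t : ℝ} (ht : 0 < t) :
    HasDerivAt (fun r => ∫ s in (0:ℝ)..r, gk (γ + 1) (r - s) • v s)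
      (∫ s in (0:ℝ)..t, gk γ (t - s) • v s) t := by
  set w : ℝ → E := fun r => ∫ s in (0:ℝ)..r, gk γ (r - s) • v s
  have hw : ContinuousOn w (Ici 0) :=
    continuousOn_integral_sub_smul (intervalIntegrable_gk hγ 0) hv
  have hftc := intervalIntegral.integral_hasDerivAt_right
    ((hw.mono (by rw [uIcc_of_le ht.le]; exact Icc_subset_Ici_self)).intervalIntegrable)
    ((hw.mono Ioi_subset_Ici_self).stronglyMeasurableAtFilter isOpen_Ioi t ht)
    (hw.continuousAt (Ici_mem_nhds ht))
  refine hftc.congr_of_eventuallyEq ?_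
  filter_upwards [Ioi_mem_nhds ht] with r hr
  rw [add_comm γ 1, ← integral_gk_sub_smul_integral_gk_sub_smul one_pos hγ (le_of_lt hr) hv]
  refine intervalIntegral.integral_congr fun s hs => ?_
  rw [uIcc_of_le (le_of_lt hr)] at hs
  simp [gk_one_of_nonneg (sub_nonneg.2 hs.2), w]

theorem hasDerivAt_sum_gk_smul {α : ℝ} (hα : 0 < α) (y : ℕ → E) {n : ℕ} (hn : 0 < n)
    {t : ℝ} (ht : 0 < t) :
    HasDerivAt (fun r => ∑ k ∈ Finset.range n, gk (k * α + 1) r • y k)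
      (∑ k ∈ Finset.Ico 1 n, gk (k * α) t • y k) t := by
  simp_rw [Finset.sum_range_eq_add_Ico _ hn]
  rw [← zero_add (∑ k ∈ Finset.Ico 1 n, gk (k * α) t • y k)]
  refine HasDerivAt.add ?_ (HasDerivAt.fun_sum fun k hk => ?_)
  · refine (hasDerivAt_const t (y 0)).congr_of_eventuallyEq ?_
    filter_upwards [Ioi_mem_nhds ht] with r hr
    simp [gk_one_of_nonneg (le_of_lt hr)]
  · have hkα : 0 < (k : ℝ) * α := mul_pos (Nat.cast_pos.2 (Finset.mem_Ico.1 hk).1) hα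
    exact (hasDerivAt_gk hkα ht).smul_const (y k)

theorem eq_sum_gk_smul_add_integral_gk_sub_smul [CompleteSpace E] {α : ℝ} (hα : 0 < α)
    {u : ℕ → ℝ → E} (hu : ∀ k, Continuous (u k)) {n : ℕ} (hn : 1 ≤ n)
    (hstep : ∀ k < n, ∀ s, 0 ≤ s →
      u k s = u k 0 + ∫ σ in (0:ℝ)..s, gk α (s - σ) • u (k + 1) σ)
    {r : ℝ} (hr : 0 ≤ r) :
    u 0 r = (∑ k ∈ Finset.range n, gk (k * α + 1) r • u k 0)
      + ∫ s in (0:ℝ)..r, gk (n * α) (r - s) • u n s := by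
  induction n, hn using Nat.le_induction with
  | base => simpa [gk_one_of_nonneg hr] using hstep 0 one_pos r hr
  | succ n hn ih =>
    have hnα : 0 < (n : ℝ) * α := mul_pos (by exact_mod_cast hn) hα
    have hgk := intervalIntegrable_gk_sub hnα r 0 r
    have hw :
        ContinuousOn (fun s => ∫ σ in (0:ℝ)..s, gk α (s - σ) • u (n + 1) σ) [[0, r]] :=
      (continuousOn_integral_sub_smul (intervalIntegrable_gk hα 0) (hu (n + 1))).mono
        (by rw [uIcc_of_le hr]; exact Icc_subset_Ici_self)
    have hsplit : ∫ s in (0:ℝ)..r, gk (n * α) (r - s) • u n s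
        = gk (n * α + 1) r • u n 0
          + ∫ s in (0:ℝ)..r, gk (n * α + α) (r - s) • u (n + 1) s := by
      rw [← integral_gk_sub_smul_integral_gk_sub_smul hnα hα hr (hu (n + 1)),
        ← integral_gk_sub hnα hr, ← intervalIntegral.integral_smul_const,
        ← intervalIntegral.integral_add (hgk.smul_continuousOn continuousOn_const)
          (hgk.smul_continuousOn hw)]
      refine intervalIntegral.integral_congr fun s hs => ?_
      rw [uIcc_of_le hr] at hs
      simp only [hstep n (by omega) s hs.1, smul_add]
    rw [ih (fun k hk => hstep k (by omega)), hsplit, Finset.sum_range_succ, add_assoc]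
    push_cast
    ring_nf

end Convolution

theorem convK0_congr {Y : Type*} [NormedAddCommGroup Y] [NormedSpace ℂ Y] {β t : ℝ}
    (ht : 0 ≤ t) {v w : ℝ → Y} (hvw : EqOn v w (Icc 0 t)) :
    convK0 β v t = convK0 β w t := by
  unfold convK0 convK
  split_ifs
  · exact hvw ⟨ht, le_rfl⟩
  · refine intervalIntegral.integral_congr fun s hs => ?_
    rw [uIcc_of_le ht] at hs
    simp only [hvw hs]

theorem hasDerivAt_integral_gk_sub_smul {β : ℝ} (hβ : 1 ≤ β) {v : ℝ → X}
    (hv : ContinuousOn v (Ici 0)) {t : ℝ} (ht : 0 < t) :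
    HasDerivAt (fun r => ∫ s in (0:ℝ)..r, gk β (r - s) • v s) (convK0 (β - 1) v t) t := by
  set v' : ℝ → X := fun s => v (max s 0)
  have hv' : EqOn v' v (Ici 0) := fun s hs => by simp only [v', max_eq_left (mem_Ici.1 hs)]
  have hderiv : HasDerivAt (fun r => ∫ s in (0:ℝ)..r, gk β (r - s) • v' s)
      (convK0 (β - 1) v' t) t := by
    unfold convK0 convK
    split_ifs with hβ1
    · obtain rfl : β = 1 := by linarith
      exact hasDerivAt_integral_gk_one_sub_smul (continuous_comp_max_zero hv) ht
    · simpa using hasDerivAt_integral_gk_add_one_sub_smul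
        (lt_of_le_of_ne (sub_nonneg.2 hβ) (Ne.symm hβ1)) (continuous_comp_max_zero hv) ht
  rw [← convK0_congr ht.le (hv'.mono Icc_subset_Ici_self)]
  refine hderiv.congr_of_eventuallyEq ?_
  filter_upwards [Ioi_mem_nhds ht] with r hr
  refine intervalIntegral.integral_congr fun s hs => ?_
  rw [uIcc_of_le (le_of_lt hr)] at hs
  simp only [hv' hs.1]

theorem pApply_iterate_succ {Y : Type*} [NormedAddCommGroup Y] [NormedSpace ℂ Y]
    {A : Y →ₗ.[ℂ] Y} {x : Y} {k : ℕ} (hk : (pApply A)^[k] x ∈ A.domain) :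
    A ⟨(pApply A)^[k] x, hk⟩ = (pApply A)^[k + 1] x := by
  rw [Function.iterate_succ_apply', pApply, dif_pos hk]

theorem IsResolventFamily.apply_eq_sum_add_integral {α : ℝ} (hα : 0 < α) {A : X →ₗ.[ℂ] X}
    {S : ℝ → X →L[ℂ] X} (hS : IsResolventFamily α A S) {n : ℕ} (hn : 1 ≤ n) {x : X}
    (hx : ∀ k < n, (pApply A)^[k] x ∈ A.domain) {r : ℝ} (hr : 0 ≤ r) :
    S r x = (∑ k ∈ Finset.range n, gk (k * α + 1) r • (pApply A)^[k] x)
      + ∫ s in (0:ℝ)..r, gk (n * α) (r - s) • S s ((pApply A)^[n] x) := by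
  obtain ⟨hScont, hS0, -, hSeq⟩ := hS
  set u : ℕ → ℝ → X := fun k s => S (max s 0) ((pApply A)^[k] x)
  have hu_of_nonneg : ∀ k s, 0 ≤ s → u k s = S s ((pApply A)^[k] x) := fun k s hs => by
    simp only [u, max_eq_left hs]
  have hstep : ∀ k < n, ∀ s, 0 ≤ s →
      u k s = u k 0 + ∫ σ in (0:ℝ)..s, gk α (s - σ) • u (k + 1) σ := by
    intro k hk s hs
    rw [hu_of_nonneg k s hs, hu_of_nonneg k 0 le_rfl, hS0, hSeq s hs _ (hx k hk),
      pApply_iterate_succ]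
    refine congrArg _ (intervalIntegral.integral_congr fun σ hσ => ?_)
    rw [uIcc_of_le hs] at hσ
    rw [hu_of_nonneg (k + 1) σ hσ.1]
  have hexpand := eq_sum_gk_smul_add_integral_gk_sub_smul hα
    (fun k => continuous_comp_max_zero (hScont _)) hn hstep hr
  simp only [max_eq_left hr, max_self, hS0, ContinuousLinearMap.id_apply,
    Function.iterate_zero_apply] at hexpand
  rw [hexpand]
  refine congrArg _ (intervalIntegral.integral_congr fun s hs => ?_)
  rw [uIcc_of_le hr] at hs
  simp only [max_eq_left hs.1]

/-- Lemma 4.5: if `A` generates an `α`-times resolvent family `S_α`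
and `nα ≥ 1`, then for `x ∈ D(Aⁿ)` the map `t ↦ S_α(t)x` is differentiable on `(0,∞)`
with `(d/dt) S_α(t)x = Σ_{k=1}^{n-1} g_{kα}(t) A^k x + (g_{nα-1} * S_α)(t) Aⁿ x`
(where `g_0 * S_α = S_α`). -/
theorem statement16 (A : X →ₗ.[ℂ] X) (α : ℝ) (hα : 0 < α) (n : ℕ)
    (hnα : 1 ≤ (n : ℝ) * α)
    (S : ℝ → X →L[ℂ] X) (hS : IsResolventFamily α A S)
    (x : X) (hx : ∀ k < n, (pApply A)^[k] x ∈ A.domain) :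
    ∀ t : ℝ, 0 < t →
      HasDerivAt (fun r => S r x)
        ((∑ k ∈ Finset.Ico 1 n, gk ((k : ℝ) * α) t • (pApply A)^[k] x)
          + convK0 ((n : ℝ) * α - 1) (fun s => S s ((pApply A)^[n] x)) t) t := by
  intro t ht
  have hn : 1 ≤ n := Nat.one_le_iff_ne_zero.2 (by rintro rfl; norm_num at hnα)
  refine ((hasDerivAt_sum_gk_smul hα _ hn ht).add
    (hasDerivAt_integral_gk_sub_smul hnα (hS.1 _) ht)).congr_of_eventuallyEq ?_
  filter_upwards [Ioi_mem_nhds ht] with r hr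
  exact hS.apply_eq_sum_add_integral hα hn hx (le_of_lt hr)

end
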